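/- D_f coincides with the Finsler quasidistance on the interior: suppose f is continuously differentiable on (0,1) with f' positive. Then for all P, Q ∈ Δ°_N, D_f(P,Q) equals the infimum of ∫_a^b max_i f'(γ_i(τ))·γ_i'(τ) dτ over all piecewise C¹ curves γ : [a,b] → Δ°_N with γ(a) = P and γ(b) = Q. -/

import Mathlib

/-!
Lower bound: on each C¹ piece the integrand dominates `(f ∘ γᵢ)'` for every `i`, so integrating
and telescoping over the pieces gives `f(qᵢ) - f(pᵢ) ≤ L` for every length `L`.

Upper bound: the bound is attained. Coordinates with `pᵢ ≤ qᵢ` move so that `f(γᵢ)` is affine in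
time, and contribute exactly `f(qᵢ) - f(pᵢ) ≤ D_f(P,Q)` to the integrand. The others move
affinely towards `qᵢ`, all with the same nondecreasing weight, chosen so that `∑ γᵢ = 1` is kept;
they contribute nonpositive terms, and `D_f(P,Q) ≥ 0` since `∑ pᵢ = ∑ qᵢ`.
-/

/-- Membership in the interior Δ°_N of the probability simplex. -/
def memInteriorSimplex {N : ℕ} (P : Fin (N + 1) → ℝ) : Prop :=
  (∀ i, P i ∈ Set.Ioo (0 : ℝ) 1) ∧ ∑ i, P i = 1

/-- The max-type quasimetric D_f(P,Q) = max_i (f(q_i) - f(p_i)). -/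
noncomputable def Df {N : ℕ} (f : ℝ → ℝ) (P Q : Fin (N + 1) → ℝ) : ℝ :=
  ⨆ i, (f (Q i) - f (P i))

/-- The set of Finsler lengths ∫_a^b max_i f'(γ_i(τ))·γ_i'(τ) dτ of piecewise C¹
curves γ : [a,b] → Δ°_N from P to Q; a piecewise C¹ curve is one which is C¹ on
each cell [t_j, t_{j+1}] of some partition a = t₀ < t₁ < … < tₙ = b. -/
def finslerLengths {N : ℕ} (f : ℝ → ℝ) (P Q : Fin (N + 1) → ℝ) : Set ℝ :=
  { L : ℝ | ∃ (a b : ℝ), a < b ∧ ∃ γ : ℝ → Fin (N + 1) → ℝ,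
      γ a = P ∧ γ b = Q ∧ (∀ τ ∈ Set.Icc a b, memInteriorSimplex (γ τ)) ∧
      ∃ (n : ℕ) (t : Fin (n + 1) → ℝ), StrictMono t ∧ t 0 = a ∧ t (Fin.last n) = b ∧
        (∀ j : Fin n, ContDiffOn ℝ 1 γ (Set.Icc (t j.castSucc) (t j.succ))) ∧
        L = ∑ j : Fin n, ∫ τ in (t j.castSucc)..(t j.succ),
              ⨆ i, deriv f (γ τ i) *
                derivWithin (fun s => γ s i) (Set.Icc (t j.castSucc) (t j.succ)) τ }

open Set Function Filter Topology

lemma ContinuousOn.ciSup_fintype {α β ι : Type*} [TopologicalSpace α]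
    [ConditionallyCompleteLattice β] [TopologicalSpace β] [ContinuousSup β] [Fintype ι] [Nonempty ι] {h : ι → α → β} {s : Set α}
    (hc : ∀ i, ContinuousOn (h i) s) : ContinuousOn (fun x => ⨆ i, h i x) s := by
  simpa only [← Finset.sup'_univ_eq_ciSup] using
    ContinuousOn.finset_sup'_apply Finset.univ_nonempty (fun i _ => hc i)

lemma Fin.sum_univ_succ_sub_castSucc {M : Type*} [AddCommGroup M] {n : ℕ} (g : Fin (n + 1) → M) :
    ∑ j : Fin n, (g j.succ - g j.castSucc) = g (Fin.last n) - g 0 := by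
  have h₀ := Fin.sum_univ_succ g
  have hₗ := Fin.sum_univ_castSucc g
  rw [Finset.sum_sub_distrib]
  calc _ = (g 0 + ∑ j : Fin n, g j.succ) - (∑ j : Fin n, g j.castSucc + g (Fin.last n))
        + g (Fin.last n) - g 0 := by abel
    _ = _ := by rw [← h₀, ← hₗ]; abel

section ChainRule

variable {f u : ℝ → ℝ} {U : Set ℝ} {c d : ℝ}

lemma continuousOn_deriv_comp_mul_derivWithin (hcd : c < d) (hU : IsOpen U)
    (hf : ContDiffOn ℝ 1 f U) (hu : ContDiffOn ℝ 1 u (Icc c d)) (huU : MapsTo u (Icc c d) U) :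
    ContinuousOn (fun τ => deriv f (u τ) * derivWithin u (Icc c d) τ) (Icc c d) :=
  ((hf.continuousOn_deriv_of_isOpen hU le_rfl).comp hu.continuousOn huU).mul
    (hu.continuousOn_derivWithin (uniqueDiffOn_Icc hcd) le_rfl)

lemma integral_deriv_comp_mul_derivWithin (hcd : c < d) (hU : IsOpen U)
    (hf : ContDiffOn ℝ 1 f U) (hu : ContDiffOn ℝ 1 u (Icc c d)) (huU : MapsTo u (Icc c d) U) :
    ∫ τ in c..d, deriv f (u τ) * derivWithin u (Icc c d) τ = f (u d) - f (u c) := by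
  have hfd : DifferentiableOn ℝ f U := hf.differentiableOn one_ne_zero
  refine intervalIntegral.integral_eq_sub_of_hasDerivAt_of_le hcd.le
    (hfd.continuousOn.comp hu.continuousOn huU) (fun τ hτ => ?_) ?_
  · have hτ' : τ ∈ Icc c d := Ioo_subset_Icc_self hτ
    have hu' : HasDerivAt u (derivWithin u (Icc c d) τ) τ :=
      ((hu.differentiableOn one_ne_zero τ hτ').hasDerivWithinAt).hasDerivAt
        (Icc_mem_nhds hτ.1 hτ.2)
    exact ((hfd.differentiableAt (hU.mem_nhds (huU hτ'))).hasDerivAt).comp τ hu'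
  · exact (continuousOn_deriv_comp_mul_derivWithin hcd hU hf hu huU).intervalIntegrable_of_Icc
      hcd.le

end ChainRule

noncomputable def finslerIntegrand {ι : Type*} (f : ℝ → ℝ) (γ : ℝ → ι → ℝ) (s : Set ℝ)
    (τ : ℝ) : ℝ :=
  ⨆ i, deriv f (γ τ i) * derivWithin (fun s => γ s i) s τ

section FinslerIntegrand

variable {ι : Type*} [Fintype ι] {f : ℝ → ℝ} {U : Set ℝ} {γ : ℝ → ι → ℝ} {c d : ℝ}

lemma continuousOn_finslerIntegrand [Nonempty ι] (hcd : c < d) (hU : IsOpen U)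
    (hf : ContDiffOn ℝ 1 f U) (hγ : ContDiffOn ℝ 1 γ (Icc c d))
    (hγU : ∀ τ ∈ Icc c d, ∀ i, γ τ i ∈ U) :
    ContinuousOn (finslerIntegrand f γ (Icc c d)) (Icc c d) :=
  ContinuousOn.ciSup_fintype fun i => continuousOn_deriv_comp_mul_derivWithin hcd hU hf
    (contDiffOn_pi.mp hγ i) fun τ hτ => hγU τ hτ i

lemma sub_le_integral_finslerIntegrand (hcd : c < d) (hU : IsOpen U)
    (hf : ContDiffOn ℝ 1 f U) (hγ : ContDiffOn ℝ 1 γ (Icc c d))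
    (hγU : ∀ τ ∈ Icc c d, ∀ i, γ τ i ∈ U) (i : ι) :
    f (γ d i) - f (γ c i) ≤ ∫ τ in c..d, finslerIntegrand f γ (Icc c d) τ := by
  have : Nonempty ι := ⟨i⟩
  have hγi : ContDiffOn ℝ 1 (fun s => γ s i) (Icc c d) := contDiffOn_pi.mp hγ i
  have hγiU : MapsTo (fun s => γ s i) (Icc c d) U := fun τ hτ => hγU τ hτ i
  rw [← integral_deriv_comp_mul_derivWithin hcd hU hf hγi hγiU]
  exact intervalIntegral.integral_mono_on hcd.le
    ((continuousOn_deriv_comp_mul_derivWithin hcd hU hf hγi hγiU).intervalIntegrable_of_Icc hcd.le)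
    ((continuousOn_finslerIntegrand hcd hU hf hγ hγU).intervalIntegrable_of_Icc hcd.le)
    fun τ _ => le_ciSup (f := fun k => deriv f (γ τ k) * derivWithin (fun s => γ s k) (Icc c d) τ)
      (Finite.bddAbove_range _) i

end FinslerIntegrand

theorem Df_le_of_mem_finslerLengths {N : ℕ} {f : ℝ → ℝ} (hf : ContDiffOn ℝ 1 f (Ioo 0 1))
    {P Q : Fin (N + 1) → ℝ} {L : ℝ} (hL : L ∈ finslerLengths f P Q) : Df f P Q ≤ L := by
  obtain ⟨-, -, -, γ, rfl, rfl, hγ, n, t, ht, rfl, rfl, hpieces, rfl⟩ := hL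
  refine ciSup_le fun i => ?_
  rw [← Fin.sum_univ_succ_sub_castSucc (fun j => f (γ (t j) i))]
  refine Finset.sum_le_sum fun j _ => sub_le_integral_finslerIntegrand
    (ht j.castSucc_lt_succ) isOpen_Ioo hf (hpieces j) (fun τ hτ => (hγ τ ?_).1) i
  exact Icc_subset_Icc (ht.monotone (Fin.zero_le _)) (ht.monotone (Fin.le_last _)) hτ

section InverseFunction

variable {f : ℝ → ℝ} {U : Set ℝ}

lemma image_mem_nhds_of_deriv_ne_zero (hU : IsOpen U) (hf : ContDiffOn ℝ 1 f U)
    {x : ℝ} (hx : x ∈ U) (hf' : deriv f x ≠ 0) : f '' U ∈ 𝓝 (f x) := by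
  have hstrict : HasStrictDerivAt f (deriv f x) x :=
    (hf.contDiffAt (hU.mem_nhds hx)).hasStrictDerivAt one_ne_zero
  rw [← hstrict.map_nhds_eq hf']
  exact image_mem_map (hU.mem_nhds hx)

lemma hasDerivAt_invFunOn_of_deriv_pos (hU : IsOpen U) (hUc : Convex ℝ U)
    (hf : ContDiffOn ℝ 1 f U) (hf' : ∀ x ∈ U, 0 < deriv f x) {y : ℝ} (hy : y ∈ f '' U) :
    HasDerivAt (invFunOn f U) (deriv f (invFunOn f U y))⁻¹ y := by
  obtain ⟨x, hx, rfl⟩ := hy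
  have hmono : StrictMonoOn f U :=
    strictMonoOn_of_deriv_pos hUc hf.continuousOn (by rwa [hU.interior_eq])
  have hleft : LeftInvOn (invFunOn f U) f U := hmono.injOn.leftInvOn_invFunOn
  have himage : f '' U ∈ 𝓝 (f x) :=
    image_mem_nhds_of_deriv_ne_zero hU hf hx (hf' x hx).ne'
  have hgmono : MonotoneOn (invFunOn f U) (f '' U) := by
    rintro _ ⟨a, ha, rfl⟩ _ ⟨b, hb, rfl⟩ hab
    rw [hleft ha, hleft hb]
    exact (hmono.le_iff_le ha hb).1 hab
  have hcont : ContinuousAt (invFunOn f U) (f x) := by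
    refine continuousAt_of_monotoneOn_of_image_mem_nhds hgmono himage ?_
    rw [hleft.image_image, hleft hx]
    exact hU.mem_nhds hx
  rw [hleft hx]
  have hfx : HasDerivAt f (deriv f x) (invFunOn f U (f x)) := by
    rw [hleft hx]
    exact ((hf.differentiableOn one_ne_zero).differentiableAt (hU.mem_nhds hx)).hasDerivAt
  exact hfx.of_local_left_inverse hcont (hf' x hx).ne'
    (eventually_of_mem himage fun y hy => (surjOn_image f U).rightInvOn_invFunOn hy)

lemma contDiffOn_invFunOn_of_deriv_pos (hU : IsOpen U) (hUc : Convex ℝ U)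
    (hf : ContDiffOn ℝ 1 f U) (hf' : ∀ x ∈ U, 0 < deriv f x) :
    ContDiffOn ℝ 1 (invFunOn f U) (f '' U) := by
  have hderiv := fun y (hy : y ∈ f '' U) => hasDerivAt_invFunOn_of_deriv_pos hU hUc hf hf' hy
  have hmaps : MapsTo (invFunOn f U) (f '' U) U := (surjOn_image f U).mapsTo_invFunOn
  have hopen : IsOpen (f '' U) := isOpen_iff_mem_nhds.2 <| by
    rintro _ ⟨x, hx, rfl⟩
    exact image_mem_nhds_of_deriv_ne_zero hU hf hx (hf' x hx).ne'
  rw [show (1 : WithTop ℕ∞) = 0 + 1 from rfl, contDiffOn_succ_iff_deriv_of_isOpen hopen]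
  refine ⟨fun y hy => (hderiv y hy).differentiableAt.differentiableWithinAt, by simp, ?_⟩
  rw [contDiffOn_zero]
  have hgcont : ContinuousOn (invFunOn f U) (f '' U) := fun y hy =>
    (hderiv y hy).continuousAt.continuousWithinAt
  exact (((hf.continuousOn_deriv_of_isOpen hU le_rfl).comp hgcont hmaps).inv₀
    fun y hy => (hf' _ (hmaps hy)).ne').congr fun y hy => (hderiv y hy).deriv

end InverseFunction

lemma Convex.add_mul_sub_mem_image {f : ℝ → ℝ} {U : Set ℝ} (hU : Convex ℝ U)
    (hf : ContinuousOn f U) {p q τ : ℝ} (hp : p ∈ U) (hq : q ∈ U) (hτ : τ ∈ Icc (0 : ℝ) 1) :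
    f p + τ * (f q - f p) ∈ f '' U :=
  (hU.isPreconnected.image f hf).convex.add_smul_sub_mem (mem_image_of_mem f hp)
    (mem_image_of_mem f hq) hτ

noncomputable def fAffinePath (f : ℝ → ℝ) (p q τ : ℝ) : ℝ :=
  invFunOn f (Ioo 0 1) (f p + τ * (f q - f p))

section fAffinePath

variable {f : ℝ → ℝ} {p q τ : ℝ}

lemma fAffinePath_eq_of_mem (hf : ContDiffOn ℝ 1 f (Ioo 0 1))
    (hf' : ∀ x ∈ Ioo (0 : ℝ) 1, 0 < deriv f x) {x : ℝ} (hx : x ∈ Ioo (0 : ℝ) 1)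
    (hτ : f p + τ * (f q - f p) = f x) : fAffinePath f p q τ = x := by
  rw [fAffinePath, hτ]
  exact (strictMonoOn_of_deriv_pos (convex_Ioo 0 1) hf.continuousOn
    (by rwa [interior_Ioo])).injOn.leftInvOn_invFunOn hx

lemma fAffinePath_zero (hf : ContDiffOn ℝ 1 f (Ioo 0 1))
    (hf' : ∀ x ∈ Ioo (0 : ℝ) 1, 0 < deriv f x) (hp : p ∈ Ioo (0 : ℝ) 1) :
    fAffinePath f p q 0 = p :=
  fAffinePath_eq_of_mem hf hf' hp (by ring)

lemma fAffinePath_one (hf : ContDiffOn ℝ 1 f (Ioo 0 1))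
    (hf' : ∀ x ∈ Ioo (0 : ℝ) 1, 0 < deriv f x) (hq : q ∈ Ioo (0 : ℝ) 1) :
    fAffinePath f p q 1 = q :=
  fAffinePath_eq_of_mem hf hf' hq (by ring)

lemma fAffinePath_mem (hf : ContinuousOn f (Ioo 0 1)) (hp : p ∈ Ioo (0 : ℝ) 1)
    (hq : q ∈ Ioo (0 : ℝ) 1) (hτ : τ ∈ Icc (0 : ℝ) 1) : fAffinePath f p q τ ∈ Ioo (0 : ℝ) 1 :=
  (surjOn_image f _).mapsTo_invFunOn ((convex_Ioo 0 1).add_mul_sub_mem_image hf hp hq hτ)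

lemma hasDerivAt_fAffinePath (hf : ContDiffOn ℝ 1 f (Ioo 0 1))
    (hf' : ∀ x ∈ Ioo (0 : ℝ) 1, 0 < deriv f x) (hp : p ∈ Ioo (0 : ℝ) 1)
    (hq : q ∈ Ioo (0 : ℝ) 1) (hτ : τ ∈ Icc (0 : ℝ) 1) :
    HasDerivAt (fAffinePath f p q) ((deriv f (fAffinePath f p q τ))⁻¹ * (f q - f p)) τ := by
  have hline : HasDerivAt (fun s => f p + s * (f q - f p)) (f q - f p) τ := by
    simpa using ((hasDerivAt_id τ).mul_const (f q - f p)).const_add (f p)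
  exact (hasDerivAt_invFunOn_of_deriv_pos isOpen_Ioo (convex_Ioo 0 1) hf hf'
    ((convex_Ioo 0 1).add_mul_sub_mem_image hf.continuousOn hp hq hτ)).comp τ hline

lemma deriv_mul_derivWithin_fAffinePath (hf : ContDiffOn ℝ 1 f (Ioo 0 1))
    (hf' : ∀ x ∈ Ioo (0 : ℝ) 1, 0 < deriv f x) (hp : p ∈ Ioo (0 : ℝ) 1)
    (hq : q ∈ Ioo (0 : ℝ) 1) (hτ : τ ∈ Icc (0 : ℝ) 1) :
    deriv f (fAffinePath f p q τ) * derivWithin (fAffinePath f p q) (Icc 0 1) τ = f q - f p := by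
  rw [((hasDerivAt_fAffinePath hf hf' hp hq hτ).hasDerivWithinAt).derivWithin
    (uniqueDiffOn_Icc zero_lt_one τ hτ), ← mul_assoc,
    mul_inv_cancel₀ (hf' _ (fAffinePath_mem hf.continuousOn hp hq hτ)).ne', one_mul]

lemma contDiffOn_fAffinePath (hf : ContDiffOn ℝ 1 f (Ioo 0 1))
    (hf' : ∀ x ∈ Ioo (0 : ℝ) 1, 0 < deriv f x) (hp : p ∈ Ioo (0 : ℝ) 1)
    (hq : q ∈ Ioo (0 : ℝ) 1) : ContDiffOn ℝ 1 (fAffinePath f p q) (Icc 0 1) :=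
  (contDiffOn_invFunOn_of_deriv_pos isOpen_Ioo (convex_Ioo 0 1) hf hf').comp
    (contDiffOn_const.add (contDiffOn_id.mul contDiffOn_const))
    fun _ hτ => (convex_Ioo 0 1).add_mul_sub_mem_image hf.continuousOn hp hq hτ

lemma monotoneOn_fAffinePath (hf : ContDiffOn ℝ 1 f (Ioo 0 1))
    (hf' : ∀ x ∈ Ioo (0 : ℝ) 1, 0 < deriv f x) (hp : p ∈ Ioo (0 : ℝ) 1)
    (hq : q ∈ Ioo (0 : ℝ) 1) (hpq : p ≤ q) : MonotoneOn (fAffinePath f p q) (Icc 0 1) := by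
  have hfpq : f p ≤ f q := (strictMonoOn_of_deriv_pos (convex_Ioo 0 1) hf.continuousOn
    (by rwa [interior_Ioo])).monotoneOn hp hq hpq
  refine monotoneOn_of_deriv_nonneg (convex_Icc 0 1)
    (contDiffOn_fAffinePath hf hf' hp hq).continuousOn (fun τ hτ => ?_) fun τ hτ => ?_
  all_goals rw [interior_Icc] at hτ
  · exact (hasDerivAt_fAffinePath hf hf' hp hq (Ioo_subset_Icc_self hτ)).differentiableAt
      |>.differentiableWithinAt
  · rw [(hasDerivAt_fAffinePath hf hf' hp hq (Ioo_subset_Icc_self hτ)).deriv]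
    exact mul_nonneg (inv_nonneg.2 (hf' _ (fAffinePath_mem hf.continuousOn hp hq
      (Ioo_subset_Icc_self hτ))).le) (sub_nonneg.2 hfpq)

end fAffinePath

section Geodesic

variable {ι : Type*} [Fintype ι] {f : ℝ → ℝ} {P Q : ι → ℝ} {τ : ℝ}

noncomputable def increasingMass (f : ℝ → ℝ) (P Q : ι → ℝ) (τ : ℝ) : ℝ :=
  ∑ i with P i ≤ Q i, fAffinePath f (P i) (Q i) τ

noncomputable def decreasingWeight (f : ℝ → ℝ) (P Q : ι → ℝ) (τ : ℝ) : ℝ :=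
  (increasingMass f P Q τ - increasingMass f P Q 0) /
    (increasingMass f P Q 1 - increasingMass f P Q 0)

noncomputable def finslerGeodesic (f : ℝ → ℝ) (P Q : ι → ℝ) (τ : ℝ) (i : ι) : ℝ :=
  if P i ≤ Q i then fAffinePath f (P i) (Q i) τ
  else P i + decreasingWeight f P Q τ * (Q i - P i)

lemma increasingMass_zero (hf : ContDiffOn ℝ 1 f (Ioo 0 1))
    (hf' : ∀ x ∈ Ioo (0 : ℝ) 1, 0 < deriv f x) (hP : ∀ i, P i ∈ Ioo (0 : ℝ) 1) :
    increasingMass f P Q 0 = ∑ i with P i ≤ Q i, P i :=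
  Finset.sum_congr rfl fun i _ => fAffinePath_zero hf hf' (hP i)

lemma increasingMass_one (hf : ContDiffOn ℝ 1 f (Ioo 0 1))
    (hf' : ∀ x ∈ Ioo (0 : ℝ) 1, 0 < deriv f x) (hQ : ∀ i, Q i ∈ Ioo (0 : ℝ) 1) :
    increasingMass f P Q 1 = ∑ i with P i ≤ Q i, Q i :=
  Finset.sum_congr rfl fun i _ => fAffinePath_one hf hf' (hQ i)

lemma increasingMass_zero_lt_one (hf : ContDiffOn ℝ 1 f (Ioo 0 1))
    (hf' : ∀ x ∈ Ioo (0 : ℝ) 1, 0 < deriv f x) (hP : ∀ i, P i ∈ Ioo (0 : ℝ) 1)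
    (hQ : ∀ i, Q i ∈ Ioo (0 : ℝ) 1) (hsum : ∑ i, P i = ∑ i, Q i) (hdec : ∃ i, Q i < P i) :
    increasingMass f P Q 0 < increasingMass f P Q 1 := by
  obtain ⟨j, hj⟩ := hdec
  have hlt : ∑ i with ¬P i ≤ Q i, Q i < ∑ i with ¬P i ≤ Q i, P i :=
    Finset.sum_lt_sum_of_nonempty ⟨j, by simpa using hj⟩ fun i hi =>
      not_le.1 (Finset.mem_filter.1 hi).2
  rw [increasingMass_zero hf hf' hP, increasingMass_one hf hf' hQ]
  have hsplitP := Finset.sum_filter_add_sum_filter_not Finset.univ (fun i => P i ≤ Q i) P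
  have hsplitQ := Finset.sum_filter_add_sum_filter_not Finset.univ (fun i => P i ≤ Q i) Q
  linarith

lemma contDiffOn_increasingMass (hf : ContDiffOn ℝ 1 f (Ioo 0 1))
    (hf' : ∀ x ∈ Ioo (0 : ℝ) 1, 0 < deriv f x) (hP : ∀ i, P i ∈ Ioo (0 : ℝ) 1)
    (hQ : ∀ i, Q i ∈ Ioo (0 : ℝ) 1) : ContDiffOn ℝ 1 (increasingMass f P Q) (Icc 0 1) := by
  unfold increasingMass
  exact ContDiffOn.sum fun i _ => contDiffOn_fAffinePath hf hf' (hP i) (hQ i)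

lemma monotoneOn_increasingMass (hf : ContDiffOn ℝ 1 f (Ioo 0 1))
    (hf' : ∀ x ∈ Ioo (0 : ℝ) 1, 0 < deriv f x) (hP : ∀ i, P i ∈ Ioo (0 : ℝ) 1)
    (hQ : ∀ i, Q i ∈ Ioo (0 : ℝ) 1) : MonotoneOn (increasingMass f P Q) (Icc 0 1) :=
  fun _ ha _ hb hab => Finset.sum_le_sum fun i hi =>
    monotoneOn_fAffinePath hf hf' (hP i) (hQ i) (Finset.mem_filter.1 hi).2 ha hb hab

lemma decreasingWeight_zero : decreasingWeight f P Q 0 = 0 := by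
  simp [decreasingWeight]

lemma decreasingWeight_one (hlt : increasingMass f P Q 0 < increasingMass f P Q 1) :
    decreasingWeight f P Q 1 = 1 :=
  div_self (sub_pos.2 hlt).ne'

lemma monotoneOn_decreasingWeight (hS : MonotoneOn (increasingMass f P Q) (Icc 0 1))
    (hlt : increasingMass f P Q 0 < increasingMass f P Q 1) :
    MonotoneOn (decreasingWeight f P Q) (Icc 0 1) := fun _ ha _ hb hab =>
  div_le_div_of_nonneg_right (sub_le_sub_right (hS ha hb hab) _) (sub_pos.2 hlt).le

lemma decreasingWeight_mem_Icc (hS : MonotoneOn (increasingMass f P Q) (Icc 0 1))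
    (hlt : increasingMass f P Q 0 < increasingMass f P Q 1) (hτ : τ ∈ Icc (0 : ℝ) 1) :
    decreasingWeight f P Q τ ∈ Icc (0 : ℝ) 1 := by
  have hμ := monotoneOn_decreasingWeight hS hlt
  constructor
  · simpa [decreasingWeight_zero] using hμ (left_mem_Icc.2 zero_le_one) hτ hτ.1
  · simpa [decreasingWeight_one hlt] using hμ hτ (right_mem_Icc.2 zero_le_one) hτ.2

lemma finslerGeodesic_of_le {i : ι} (h : P i ≤ Q i) :
    finslerGeodesic f P Q τ i = fAffinePath f (P i) (Q i) τ :=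
  if_pos h

lemma finslerGeodesic_of_lt {i : ι} (h : Q i < P i) :
    finslerGeodesic f P Q τ i = P i + decreasingWeight f P Q τ * (Q i - P i) :=
  if_neg (not_le.2 h)

lemma finslerGeodesic_zero (hf : ContDiffOn ℝ 1 f (Ioo 0 1))
    (hf' : ∀ x ∈ Ioo (0 : ℝ) 1, 0 < deriv f x) (hP : ∀ i, P i ∈ Ioo (0 : ℝ) 1) :
    finslerGeodesic f P Q 0 = P := by
  ext i
  rcases le_or_gt (P i) (Q i) with h | h
  · rw [finslerGeodesic_of_le h, fAffinePath_zero hf hf' (hP i)]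
  · rw [finslerGeodesic_of_lt h, decreasingWeight_zero, zero_mul, add_zero]

lemma finslerGeodesic_one (hf : ContDiffOn ℝ 1 f (Ioo 0 1))
    (hf' : ∀ x ∈ Ioo (0 : ℝ) 1, 0 < deriv f x) (hQ : ∀ i, Q i ∈ Ioo (0 : ℝ) 1)
    (hlt : increasingMass f P Q 0 < increasingMass f P Q 1) :
    finslerGeodesic f P Q 1 = Q := by
  ext i
  rcases le_or_gt (P i) (Q i) with h | h
  · rw [finslerGeodesic_of_le h, fAffinePath_one hf hf' (hQ i)]
  · rw [finslerGeodesic_of_lt h, decreasingWeight_one hlt]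
    ring

lemma finslerGeodesic_mem (hf : ContDiffOn ℝ 1 f (Ioo 0 1))
    (hf' : ∀ x ∈ Ioo (0 : ℝ) 1, 0 < deriv f x) (hP : ∀ i, P i ∈ Ioo (0 : ℝ) 1)
    (hQ : ∀ i, Q i ∈ Ioo (0 : ℝ) 1) (hlt : increasingMass f P Q 0 < increasingMass f P Q 1)
    (hτ : τ ∈ Icc (0 : ℝ) 1) (i : ι) : finslerGeodesic f P Q τ i ∈ Ioo (0 : ℝ) 1 := by
  rcases le_or_gt (P i) (Q i) with h | h
  · rw [finslerGeodesic_of_le h]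
    exact fAffinePath_mem hf.continuousOn (hP i) (hQ i) hτ
  · rw [finslerGeodesic_of_lt h]
    exact (convex_Ioo 0 1).add_smul_sub_mem (hP i) (hQ i)
      (decreasingWeight_mem_Icc (monotoneOn_increasingMass hf hf' hP hQ) hlt hτ)

lemma sum_finslerGeodesic (hf : ContDiffOn ℝ 1 f (Ioo 0 1))
    (hf' : ∀ x ∈ Ioo (0 : ℝ) 1, 0 < deriv f x) (hP : ∀ i, P i ∈ Ioo (0 : ℝ) 1)
    (hQ : ∀ i, Q i ∈ Ioo (0 : ℝ) 1) (hsum : ∑ i, P i = ∑ i, Q i)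
    (hlt : increasingMass f P Q 0 < increasingMass f P Q 1) :
    ∑ i, finslerGeodesic f P Q τ i = ∑ i, P i := by
  have hinc : ∑ i with P i ≤ Q i, finslerGeodesic f P Q τ i = increasingMass f P Q τ :=
    Finset.sum_congr rfl fun i hi => finslerGeodesic_of_le (Finset.mem_filter.1 hi).2
  have hdec : ∑ i with ¬P i ≤ Q i, finslerGeodesic f P Q τ i =
      ∑ i with ¬P i ≤ Q i, P i + decreasingWeight f P Q τ *
        (∑ i with ¬P i ≤ Q i, Q i - ∑ i with ¬P i ≤ Q i, P i) := by
    rw [← Finset.sum_sub_distrib, Finset.mul_sum, ← Finset.sum_add_distrib]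
    exact Finset.sum_congr rfl fun i hi =>
      finslerGeodesic_of_lt (not_le.1 (Finset.mem_filter.1 hi).2)
  have hweight : decreasingWeight f P Q τ * (increasingMass f P Q 1 - increasingMass f P Q 0) =
      increasingMass f P Q τ - increasingMass f P Q 0 :=
    div_mul_cancel₀ _ (sub_pos.2 hlt).ne'
  have hsplitP := Finset.sum_filter_add_sum_filter_not Finset.univ (fun i => P i ≤ Q i) P
  have hsplitQ := Finset.sum_filter_add_sum_filter_not Finset.univ (fun i => P i ≤ Q i) Q
  rw [← Finset.sum_filter_add_sum_filter_not Finset.univ (fun i => P i ≤ Q i), hinc, hdec]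
  rw [increasingMass_zero hf hf' hP, increasingMass_one hf hf' hQ] at hweight
  linear_combination hsplitP - hweight + decreasingWeight f P Q τ * (hsplitQ - hsplitP - hsum)

lemma contDiffOn_finslerGeodesic (hf : ContDiffOn ℝ 1 f (Ioo 0 1))
    (hf' : ∀ x ∈ Ioo (0 : ℝ) 1, 0 < deriv f x) (hP : ∀ i, P i ∈ Ioo (0 : ℝ) 1)
    (hQ : ∀ i, Q i ∈ Ioo (0 : ℝ) 1) : ContDiffOn ℝ 1 (finslerGeodesic f P Q) (Icc 0 1) := by
  refine contDiffOn_pi.2 fun i => ?_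
  rcases le_or_gt (P i) (Q i) with h | h
  · simp only [finslerGeodesic_of_le h]
    exact contDiffOn_fAffinePath hf hf' (hP i) (hQ i)
  · simp only [finslerGeodesic_of_lt h]
    exact contDiffOn_const.add <| (((contDiffOn_increasingMass hf hf' hP hQ).sub
      contDiffOn_const).div_const _).mul contDiffOn_const

lemma deriv_mul_derivWithin_finslerGeodesic_le (hf : ContDiffOn ℝ 1 f (Ioo 0 1))
    (hf' : ∀ x ∈ Ioo (0 : ℝ) 1, 0 < deriv f x) (hP : ∀ i, P i ∈ Ioo (0 : ℝ) 1)
    (hQ : ∀ i, Q i ∈ Ioo (0 : ℝ) 1) (hlt : increasingMass f P Q 0 < increasingMass f P Q 1)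
    (hτ : τ ∈ Icc (0 : ℝ) 1) (i : ι) :
    deriv f (finslerGeodesic f P Q τ i) *
        derivWithin (fun s => finslerGeodesic f P Q s i) (Icc 0 1) τ ≤
      max (f (Q i) - f (P i)) 0 := by
  rcases le_or_gt (P i) (Q i) with h | h
  · simp only [finslerGeodesic_of_le h]
    rw [deriv_mul_derivWithin_fAffinePath hf hf' (hP i) (hQ i) hτ]
    exact le_max_left _ _
  · have hanti : AntitoneOn (fun s => finslerGeodesic f P Q s i) (Icc 0 1) := by
      intro a ha b hb hab
      simp only [finslerGeodesic_of_lt h]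
      have := monotoneOn_decreasingWeight (monotoneOn_increasingMass hf hf' hP hQ) hlt ha hb hab
      nlinarith
    exact (mul_nonpos_of_nonneg_of_nonpos (hf' _ (finslerGeodesic_mem hf hf' hP hQ hlt hτ i)).le
      hanti.derivWithin_nonpos).trans (le_max_right _ _)

end Geodesic

section Simplex

variable {N : ℕ} {f : ℝ → ℝ} {P Q : Fin (N + 1) → ℝ}

lemma sub_le_Df (i : Fin (N + 1)) : f (Q i) - f (P i) ≤ Df f P Q :=
  le_ciSup (f := fun i => f (Q i) - f (P i)) (Finite.bddAbove_range _) i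

lemma Df_nonneg (hf : MonotoneOn f (Ioo 0 1)) (hP : memInteriorSimplex P)
    (hQ : memInteriorSimplex Q) : 0 ≤ Df f P Q := by
  obtain ⟨i, -, hi⟩ := Finset.exists_le_of_sum_le Finset.univ_nonempty (hP.2.trans hQ.2.symm).le
  exact (sub_nonneg.2 (hf (hP.1 i) (hQ.1 i) hi)).trans (sub_le_Df i)

lemma exists_mem_finslerLengths_le_of_finslerIntegrand_le (hf : ContDiffOn ℝ 1 f (Ioo 0 1))
    {γ : ℝ → Fin (N + 1) → ℝ} (hγ0 : γ 0 = P) (hγ1 : γ 1 = Q)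
    (hγ : ∀ τ ∈ Icc (0 : ℝ) 1, memInteriorSimplex (γ τ)) (hγC1 : ContDiffOn ℝ 1 γ (Icc 0 1))
    {M : ℝ} (hM : ∀ τ ∈ Icc (0 : ℝ) 1, finslerIntegrand f γ (Icc 0 1) τ ≤ M) :
    ∃ L ∈ finslerLengths f P Q, L ≤ M := by
  refine ⟨∫ τ in (0 : ℝ)..1, finslerIntegrand f γ (Icc 0 1) τ,
    ⟨0, 1, zero_lt_one, γ, hγ0, hγ1, hγ, 1, ![0, 1], ?_, rfl, rfl, ?_, ?_⟩, ?_⟩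
  · simp [StrictMono, Fin.forall_fin_two]
  · simpa using hγC1
  · simp [finslerIntegrand]
  · have hint := (continuousOn_finslerIntegrand zero_lt_one isOpen_Ioo hf hγC1
      fun τ hτ => (hγ τ hτ).1).intervalIntegrable_of_Icc (μ := MeasureTheory.volume) zero_le_one
    simpa using intervalIntegral.integral_mono_on zero_le_one hint
      intervalIntegrable_const hM

theorem exists_mem_finslerLengths_le_Df (hf : ContDiffOn ℝ 1 f (Ioo 0 1))
    (hf' : ∀ x ∈ Ioo (0 : ℝ) 1, 0 < deriv f x) (hP : memInteriorSimplex P) (hQ : memInteriorSimplex Q) :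
    ∃ L ∈ finslerLengths f P Q, L ≤ Df f P Q := by
  have hsum : ∑ i, P i = ∑ i, Q i := hP.2.trans hQ.2.symm
  have hDf : 0 ≤ Df f P Q := Df_nonneg
    (strictMonoOn_of_deriv_pos (convex_Ioo 0 1) hf.continuousOn (by rwa [interior_Ioo])).monotoneOn
    hP hQ
  by_cases hdec : ∃ i, Q i < P i
  · have hlt := increasingMass_zero_lt_one hf hf' hP.1 hQ.1 hsum hdec
    refine exists_mem_finslerLengths_le_of_finslerIntegrand_le hf
      (finslerGeodesic_zero hf hf' hP.1) (finslerGeodesic_one hf hf' hQ.1 hlt)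
      (fun τ hτ => ⟨finslerGeodesic_mem hf hf' hP.1 hQ.1 hlt hτ,
        (sum_finslerGeodesic hf hf' hP.1 hQ.1 hsum hlt).trans hP.2⟩)
      (contDiffOn_finslerGeodesic hf hf' hP.1 hQ.1) fun τ hτ => ciSup_le fun i => ?_
    exact (deriv_mul_derivWithin_finslerGeodesic_le hf hf' hP.1 hQ.1 hlt hτ i).trans
      (max_le (sub_le_Df i) hDf)
  · obtain rfl : P = Q := funext fun i =>
      (Finset.sum_eq_sum_iff_of_le fun i _ => not_lt.1 fun h => hdec ⟨i, h⟩).1 hsum i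
        (Finset.mem_univ i)
    refine exists_mem_finslerLengths_le_of_finslerIntegrand_le hf rfl rfl (fun _ _ => hP)
      contDiffOn_const fun τ _ => ciSup_le fun i => ?_
    simpa using hDf

end Simplex

theorem stmt_17_general {N : ℕ} (f : ℝ → ℝ)
    (hfsmooth : ContDiffOn ℝ 1 f (Set.Ioo 0 1))
    (hf'pos : ∀ x ∈ Set.Ioo (0 : ℝ) 1, 0 < deriv f x)
    (P Q : Fin (N + 1) → ℝ)
    (hP : memInteriorSimplex P) (hQ : memInteriorSimplex Q) :
    Df f P Q = sInf (finslerLengths f P Q) := by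
  have hlower : ∀ L ∈ finslerLengths f P Q, Df f P Q ≤ L := fun _ hL =>
    Df_le_of_mem_finslerLengths hfsmooth hL
  obtain ⟨L, hL, hLle⟩ := exists_mem_finslerLengths_le_Df hfsmooth hf'pos hP hQ
  exact le_antisymm (le_csInf ⟨L, hL⟩ hlower) ((csInf_le ⟨_, hlower⟩ hL).trans hLle)

/-- if f is C¹ on (0,1) with f' > 0 there, then D_f coincides on
Δ°_N with the Finsler quasidistance: D_f(P,Q) is the infimum of the Finsler
lengths of piecewise C¹ curves in Δ°_N joining P to Q. -/
theorem stmt_17 {N : ℕ} (f : ℝ → ℝ)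
    (hfc : ContinuousOn f (Set.Icc 0 1))
    (hfm : StrictMonoOn f (Set.Icc 0 1))
    (hf0 : f 0 = 0) (hf1 : f 1 = 1)
    (hfsmooth : ContDiffOn ℝ 1 f (Set.Ioo 0 1))
    (hf'pos : ∀ x ∈ Set.Ioo (0 : ℝ) 1, 0 < deriv f x)
    (P Q : Fin (N + 1) → ℝ)
    (hP : memInteriorSimplex P) (hQ : memInteriorSimplex Q) :
    Df f P Q = sInf (finslerLengths f P Q) :=
  stmt_17_general f hfsmooth hf'pos P Q hP hQ
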